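/- arXiv:2605.02229 — 3 statements merged into one kernel-verified Lean document; each statement's English description precedes it below -/
import Mathlib

section
/- Let S be a cohesive set of players in the network coordination game, meaning ∑_{j∈S} a_{ij} ≥ 1/(2+α) for every i ∈ S. Then for every strategy profile x ∈ {−1,+1}ⁿ in which x_j = +1 for all j ∈ S, and for every i ∈ S, one has f_i(+1, x_{−i}) ≥ f_i(−1, x_{−i}); that is, +1 is a best response for every member of S regardless of the strategies of the players outside S. -/
open Finset

/-- Payoff of player `i` in the binary network coordination game for choosing
strategy `s ∈ {-1,+1}` against the profile `x`, with relative advantage `α`. -/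
noncomputable def coordPayoff (n : ℕ) (A : Fin n → Fin n → ℝ) (α : ℝ) (x : Fin n → ℝ)
    (i : Fin n) (s : ℝ) : ℝ :=
  (1 / 4) * ∑ j, A i j * ((1 + α) * (1 + s) * (1 + x j) + (1 - s) * (1 - x j))

/-- If `S` is cohesive, i.e. `∑_{j∈S} a_{ij} ≥ 1/(2+α)` for every
`i ∈ S`, then for every strategy profile `x ∈ {-1,+1}ⁿ` with `x_j = +1` on `S` and
every `i ∈ S`, `f_i(+1,x_{-i}) ≥ f_i(-1,x_{-i})`: `+1` is a best response for every
member of `S` regardless of the strategies outside `S`. -/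
theorem cohesive_set_plus_one_best_response
    (n : ℕ) (hn : 2 ≤ n) (A : Fin n → Fin n → ℝ)
    (hA : ∀ i j, 0 ≤ A i j) (hdiag : ∀ i, A i i = 0)
    (hrow : ∀ i, ∑ j, A i j = 1)
    (α : ℝ) (hα : α > -1)
    (S : Finset (Fin n))
    (hcoh : ∀ i ∈ S, 1 / (2 + α) ≤ ∑ j ∈ S, A i j)
    (x : Fin n → ℝ) (hx : ∀ j, x j = -1 ∨ x j = 1)
    (hxS : ∀ j ∈ S, x j = 1) :
    ∀ i ∈ S, coordPayoff n A α x i 1 ≥ coordPayoff n A α x i (-1) := by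
  intro i hi
  have h2α : (0:ℝ) < 2 + α := by linarith
  have hP : 1 / (2 + α) ≤ ∑ j ∈ S, A i j := hcoh i hi
  have hP1 : 1 ≤ (2 + α) * ∑ j ∈ S, A i j := by
    rw [div_le_iff₀ h2α] at hP; linarith [hP]
  set T := ∑ j, A i j * x j with hTdef
  have hdiff : coordPayoff n A α x i 1 - coordPayoff n A α x i (-1)
      = (1/2)*(2+α)*T + (1/2)*α*(∑ j, A i j) := by
    simp only [coordPayoff, hTdef, Finset.mul_sum]
    rw [← Finset.sum_sub_distrib, ← Finset.sum_add_distrib]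
    apply Finset.sum_congr rfl
    intro j _
    ring
  rw [hrow i] at hdiff
  have h1 : ∑ j, A i j * (if j ∈ S then (1:ℝ) else -1) ≤ T := by
    apply Finset.sum_le_sum
    intro j _
    by_cases hj : j ∈ S
    · simp [hj, hxS j hj]
    · simp only [hj, if_false]
      rcases hx j with h | h
      · simp [h]
      · rw [h]; nlinarith [hA i j]
  have h2 : ∑ j, A i j * (if j ∈ S then (1:ℝ) else -1)
      = 2 * (∑ j ∈ S, A i j) - ∑ j, A i j := by
    have : ∀ j : Fin n, A i j * (if j ∈ S then (1:ℝ) else -1)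
        = 2 * (if j ∈ S then A i j else 0) - A i j := by
      intro j; by_cases hj : j ∈ S <;> simp [hj] <;> ring
    simp only [this, Finset.sum_sub_distrib, ← Finset.mul_sum]
    congr 1
    rw [Finset.sum_ite_mem, Finset.univ_inter]
  rw [hrow i] at h2
  have hT : 2 * (∑ j ∈ S, A i j) - 1 ≤ T := by rw [← h2]; exact h1
  nlinarith [hT, hP1]
end

section
/- Suppose S ⊆ {1,…,n} is a set of players such that ∑_{j∈S} a_{ij} ≥ 1/(2+α) for every i ∈ S and ∑_{j∉S} a_{ij} ≥ (1+α)/(2+α) for every i ∉ S. Then the clustered strategy profile x* with x*_i = +1 for i ∈ S and x*_i = −1 for i ∉ S is a Nash equilibrium of the network coordination game (local coordination with global diversity). -/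
/-!
Against the clustered profile, playing `+1` earns player `i` exactly `(1 + α)` times the weight
`p` it puts on `S`, and playing `-1` earns the weight `q = 1 - p` it puts on the complement.
The conditions `p ≥ 1/(2+α)` on `S` and `q ≥ (1+α)/(2+α)` off `S` are then precisely the
statements that the clustered strategy of `i` is a best response.
-/

open Finset

section Clustered

variable {n : ℕ} (A : Fin n → Fin n → ℝ) (α : ℝ) (S : Finset (Fin n)) (i : Fin n)

lemma coordPayoff_clustered (s : ℝ) :
    coordPayoff n A α (fun j => if j ∈ S then 1 else -1) i s =
      ((1 + α) * (1 + s) * ∑ j ∈ S, A i j + (1 - s) * ∑ j ∈ Sᶜ, A i j) / 2 := by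
  have on_S : ∀ j ∈ S, A i j * ((1 + α) * (1 + s) * (1 + if j ∈ S then 1 else -1)
      + (1 - s) * (1 - if j ∈ S then 1 else -1)) = 2 * (1 + α) * (1 + s) * A i j := by
    intro j hj
    simp only [if_pos hj]
    ring
  have off_S : ∀ j ∈ Sᶜ, A i j * ((1 + α) * (1 + s) * (1 + if j ∈ S then 1 else -1)
      + (1 - s) * (1 - if j ∈ S then 1 else -1)) = 2 * (1 - s) * A i j := by
    intro j hj
    simp only [if_neg (mem_compl.mp hj)]
    ring
  rw [coordPayoff, ← sum_add_sum_compl S, sum_congr rfl on_S, sum_congr rfl off_S, ← mul_sum,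
    ← mul_sum]
  ring

lemma coordPayoff_clustered_one :
    coordPayoff n A α (fun j => if j ∈ S then 1 else -1) i 1 = (1 + α) * ∑ j ∈ S, A i j := by
  rw [coordPayoff_clustered]
  ring

lemma coordPayoff_clustered_neg_one :
    coordPayoff n A α (fun j => if j ∈ S then 1 else -1) i (-1) = ∑ j ∈ Sᶜ, A i j := by
  rw [coordPayoff_clustered]
  ring

end Clustered

theorem clustered_profile_nash_equilibrium_general
    (n : ℕ) (A : Fin n → Fin n → ℝ)
    (hrow : ∀ i, ∑ j, A i j = 1)
    (α : ℝ) (hα : α > -1)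
    (S : Finset (Fin n))
    (hin : ∀ i ∈ S, 1 / (2 + α) ≤ ∑ j ∈ S, A i j)
    (hout : ∀ i ∉ S, (1 + α) / (2 + α) ≤ ∑ j ∈ Sᶜ, A i j) :
    ∀ i : Fin n, ∀ s : ℝ, (s = -1 ∨ s = 1) →
      coordPayoff n A α (fun j => if j ∈ S then 1 else -1) i
          ((fun j => if j ∈ S then (1 : ℝ) else -1) i) ≥
        coordPayoff n A α (fun j => if j ∈ S then 1 else -1) i s := by
  intro i s hs
  have h2α : 0 < 2 + α := by linarith
  have hsplit : ∑ j ∈ S, A i j = 1 - ∑ j ∈ Sᶜ, A i j := by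
    rw [← hrow i, ← sum_add_sum_compl S]
    ring
  by_cases hi : i ∈ S
  · have hgain : 1 ≤ (2 + α) * ∑ j ∈ S, A i j := (div_le_iff₀' h2α).mp (hin i hi)
    rcases hs with rfl | rfl <;>
      simp only [hi, if_true, ge_iff_le, coordPayoff_clustered_one,
        coordPayoff_clustered_neg_one] <;> linarith
  · have hgain : 1 + α ≤ (2 + α) * ∑ j ∈ Sᶜ, A i j := (div_le_iff₀' h2α).mp (hout i hi)
    rcases hs with rfl | rfl <;>
      simp only [hi, if_false, ge_iff_le, coordPayoff_clustered_one,
        coordPayoff_clustered_neg_one, hsplit] <;> linarith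

/-- If `S` satisfies `∑_{j∈S} a_{ij} ≥ 1/(2+α)` for every `i ∈ S`
and `∑_{j∉S} a_{ij} ≥ (1+α)/(2+α)` for every `i ∉ S`, then the clustered profile
`x*` with `x*_i = +1` on `S` and `x*_i = -1` outside `S` is a Nash equilibrium of
the network coordination game. -/
theorem clustered_profile_nash_equilibrium
    (n : ℕ) (hn : 2 ≤ n) (A : Fin n → Fin n → ℝ)
    (hA : ∀ i j, 0 ≤ A i j) (hdiag : ∀ i, A i i = 0)
    (hrow : ∀ i, ∑ j, A i j = 1)
    (α : ℝ) (hα : α > -1)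
    (S : Finset (Fin n))
    (hin : ∀ i ∈ S, 1 / (2 + α) ≤ ∑ j ∈ S, A i j)
    (hout : ∀ i ∉ S, (1 + α) / (2 + α) ≤ ∑ j ∈ Sᶜ, A i j) :
    ∀ i : Fin n, ∀ s : ℝ, (s = -1 ∨ s = 1) →
      coordPayoff n A α (fun j => if j ∈ S then 1 else -1) i
          ((fun j => if j ∈ S then (1 : ℝ) else -1) i) ≥
        coordPayoff n A α (fun j => if j ∈ S then 1 else -1) i s :=
  clustered_profile_nash_equilibrium_general n A hrow α hα S hin hout
end

section
/- For an integer k ≥ 2, real α > −1, and u ∈ [0,1], define the critical threshold ζ*(u) = inf { ζ ∈ [0,1] : f_u(z) > 0 for all z ∈ (ζ,1) } (the infimum is over a nonempty set since ζ = 1 belongs to it vacuously). Then ζ* is monotonically nonincreasing in the sensitivity parameter: if 0 ≤ u ≤ u' ≤ 1 then ζ*(u') ≤ ζ*(u). -/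
open Finset

/-- The function `Π_{k,α}(ζ) = ∑_{ℓ=⌊k/(2+α)⌋+1}^{k} C(k,ℓ) ζ^ℓ (1-ζ)^{k-ℓ}`. -/
noncomputable def trendPi (k : ℕ) (α : ℝ) (ζ : ℝ) : ℝ :=
  ∑ ℓ ∈ Finset.Icc ((⌊(k : ℝ) / (2 + α)⌋).toNat + 1) k,
    (k.choose ℓ : ℝ) * ζ ^ ℓ * (1 - ζ) ^ (k - ℓ)

/-- The function `f_u(ζ) = (1-u) Π_{k,α}(ζ) - ζ + u`. -/
noncomputable def trendF (k : ℕ) (α : ℝ) (u : ℝ) (ζ : ℝ) : ℝ :=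
  (1 - u) * trendPi k α ζ - ζ + u

/-- The critical threshold
`ζ*(u) = inf { ζ ∈ [0,1] : f_u(z) > 0 for all z ∈ (ζ,1) }`. -/
noncomputable def criticalThreshold (k : ℕ) (α : ℝ) (u : ℝ) : ℝ :=
  sInf {ζ : ℝ | ζ ∈ Set.Icc (0 : ℝ) 1 ∧ ∀ z : ℝ, ζ < z → z < 1 → trendF k α u z > 0}

lemma trendPi_nonneg (k : ℕ) (α : ℝ) {ζ : ℝ} (h0 : 0 ≤ ζ) (h1 : ζ ≤ 1) :
    0 ≤ trendPi k α ζ := by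
  apply Finset.sum_nonneg
  intro ℓ _
  exact mul_nonneg (mul_nonneg (Nat.cast_nonneg _) (pow_nonneg h0 _)) (pow_nonneg (by linarith) _)

lemma trendPi_le_one (k : ℕ) (α : ℝ) {ζ : ℝ} (h0 : 0 ≤ ζ) (h1 : ζ ≤ 1) :
    trendPi k α ζ ≤ 1 := by
  have hbin : ∑ ℓ ∈ Finset.range (k + 1),
      (k.choose ℓ : ℝ) * ζ ^ ℓ * (1 - ζ) ^ (k - ℓ) = 1 := by
    have h := add_pow ζ (1 - ζ) k
    simp only [add_sub_cancel, one_pow] at h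
    conv_rhs => rw [h]
    exact Finset.sum_congr rfl fun ℓ _ => by ring
  rw [← hbin]
  apply Finset.sum_le_sum_of_subset_of_nonneg
  · intro ℓ hℓ
    simp only [Finset.mem_Icc] at hℓ
    simp only [Finset.mem_range]
    omega
  · intro ℓ _ _
    exact mul_nonneg (mul_nonneg (Nat.cast_nonneg _) (pow_nonneg h0 _)) (pow_nonneg (by linarith) _)

/-- For `k ≥ 2`, `α > -1`, the critical threshold `ζ*(u)` is
monotonically nonincreasing in the sensitivity parameter: if `0 ≤ u ≤ u' ≤ 1`
then `ζ*(u') ≤ ζ*(u)`. -/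
theorem criticalThreshold_antitone
    (k : ℕ) (hk : 2 ≤ k) (α : ℝ) (hα : α > -1)
    (u u' : ℝ) (hu0 : 0 ≤ u) (huu : u ≤ u') (hu1 : u' ≤ 1) :
    criticalThreshold k α u' ≤ criticalThreshold k α u := by
  apply csInf_le_csInf
  · exact ⟨0, fun ζ hζ => hζ.1.1⟩
  · refine ⟨1, ⟨le_refl _ |>.trans zero_le_one, le_refl 1⟩, fun z hz hz1 => absurd (hz.trans hz1) (lt_irrefl 1)⟩
  · rintro ζ ⟨hζmem, hζ⟩
    refine ⟨hζmem, fun z hz hz1 => ?_⟩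
    have hz0 : 0 ≤ z := le_of_lt (lt_of_le_of_lt hζmem.1 hz)
    have hPi0 := trendPi_nonneg k α hz0 hz1.le
    have hPi1 := trendPi_le_one k α hz0 hz1.le
    have h := hζ z hz hz1
    unfold trendF at h ⊢
    nlinarith [mul_nonneg (sub_nonneg.2 huu) (sub_nonneg.2 hPi1)]
end
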